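/- arXiv:hep-th/9911100 — 3 statements merged into one kernel-verified Lean document; each statement's English description precedes it below -/
import Mathlib

section
/- Global causality criterion: let e, e' ∈ S^{d−1} be Euclidean unit vectors in ℝ^d and τ, τ' ∈ ℝ with |τ − τ'| ≤ π. Then q(Ξ(e,τ) − Ξ(e',τ')) > 0 (global timelike separation) if and only if |τ − τ'| > arccos(e·e'), and q(Ξ(e,τ) − Ξ(e',τ')) < 0 (global spacelike separation) if and only if |τ − τ'| < arccos(e·e'). -/
/-!
Fix an integer d ≥ 1, written as d = n+1.
Minkowski space ℝ^d is `Fin (n+1) → ℝ`, with Minkowski bilinear form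
⟨x,y⟩ = x⁰y⁰ − Σ_{i=1}^{d−1} xⁱyⁱ.
The ambient space ℝ^{d+2} is modeled as `ℝ × (Fin (n+1) → ℝ) × ℝ`,
the three components holding ξ⁰, (ξ¹,…,ξ^d) and ξ^{d+1} respectively,
with quadratic form q(ξ) = (ξ⁰)² + (ξ^{d+1})² − Σ_{i=1}^{d} (ξⁱ)².
-/

noncomputable section

open Real

/-- Minkowski bilinear form ⟨x,y⟩ = x⁰y⁰ − Σ_{i=1}^{d−1} xⁱyⁱ on ℝ^d, d = n+1. -/
def mink (n : ℕ) (x y : Fin (n + 1) → ℝ) : ℝ :=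
  x 0 * y 0 - ∑ i : Fin n, x i.succ * y i.succ

/-- Minkowski square x² = ⟨x,x⟩. -/
def minkSq (n : ℕ) (x : Fin (n + 1) → ℝ) : ℝ := mink n x x

/-- The ambient space ℝ^{d+2}: components (ξ⁰, (ξ¹,…,ξ^d), ξ^{d+1}). -/
abbrev Ambient (n : ℕ) := ℝ × (Fin (n + 1) → ℝ) × ℝ

/-- The quadratic form q(ξ) = (ξ⁰)² + (ξ^{d+1})² − Σ_{i=1}^{d}(ξⁱ)² of signature (2,d). -/
def ambQ (n : ℕ) (ξ : Ambient n) : ℝ := ξ.1 ^ 2 + ξ.2.2 ^ 2 - ∑ i, ξ.2.1 i ^ 2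

/-- The Dirac–Weyl embedding: ξ(x)^μ = x^μ (0 ≤ μ ≤ d−1), ξ(x)^d = ½(1+x²),
ξ(x)^{d+1} = ½(1−x²). -/
def diracWeyl (n : ℕ) (x : Fin (n + 1) → ℝ) : Ambient n :=
  (x 0, Fin.snoc (fun i : Fin n => x i.succ) ((1 + minkSq n x) / 2), (1 - minkSq n x) / 2)

/-- The cylinder parametrization Ξ(e,τ) = (sin τ, e¹, …, e^d, cos τ). -/
def cyl (n : ℕ) (e : Fin (n + 1) → ℝ) (τ : ℝ) : Ambient n :=
  (Real.sin τ, e, Real.cos τ)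

/-- The projective (stereographic) coordinate π(ξ) = (ξ⁰,…,ξ^{d−1})/(ξ^d + ξ^{d+1}). -/
def stereo (n : ℕ) (ξ : Ambient n) : Fin (n + 1) → ℝ :=
  fun j => (Fin.cons ξ.1 (fun i : Fin n => ξ.2.1 i.castSucc) : Fin (n + 1) → ℝ) j / (ξ.2.1 (Fin.last n) + ξ.2.2)

/-! The chord between two points of the cylinder has q = 2 (e·e' − cos(τ − τ')), so its sign
compares cos |τ − τ'| with e·e' ∈ [-1, 1]; since cos is strictly decreasing on [0, π] with
inverse arccos, this is the comparison of |τ − τ'| with arccos (e·e'). -/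

namespace Real

lemma arccos_lt_iff_cos_lt {s t : ℝ} (hs : s ∈ Set.Icc (-1) 1) (ht : t ∈ Set.Icc 0 π) :
    arccos s < t ↔ cos t < s := by
  conv_rhs => rw [← cos_arccos hs.1 hs.2]
  exact (strictAntiOn_cos.lt_iff_gt ht ⟨arccos_nonneg s, arccos_le_pi s⟩).symm

lemma lt_arccos_iff_lt_cos {s t : ℝ} (hs : s ∈ Set.Icc (-1) 1) (ht : t ∈ Set.Icc 0 π) :
    t < arccos s ↔ s < cos t := by
  conv_rhs => rw [← cos_arccos hs.1 hs.2]
  exact (strictAntiOn_cos.lt_iff_gt ⟨arccos_nonneg s, arccos_le_pi s⟩ ht).symm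

end Real

section UnitVectors

variable {ι : Type*} [Fintype ι] {e e' : ι → ℝ}

lemma sum_mul_mem_Icc_of_sum_sq_eq_one (he : ∑ i, e i ^ 2 = 1) (he' : ∑ i, e' i ^ 2 = 1) :
    ∑ i, e i * e' i ∈ Set.Icc (-1) 1 := by
  have hcs := Finset.sum_mul_sq_le_sq_mul_sq Finset.univ e e'
  rw [he, he', one_mul, sq_le_one_iff_abs_le_one] at hcs
  exact abs_le.mp hcs

lemma sum_sub_sq_of_sum_sq_eq_one (he : ∑ i, e i ^ 2 = 1) (he' : ∑ i, e' i ^ 2 = 1) :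
    ∑ i, (e i - e' i) ^ 2 = 2 - 2 * ∑ i, e i * e' i := by
  calc ∑ i, (e i - e' i) ^ 2 = ∑ i, e i ^ 2 + ∑ i, e' i ^ 2 - 2 * ∑ i, e i * e' i := by
        rw [Finset.mul_sum, ← Finset.sum_add_distrib, ← Finset.sum_sub_distrib]
        exact Finset.sum_congr rfl fun i _ ↦ by ring
    _ = 2 - 2 * ∑ i, e i * e' i := by rw [he, he']; ring

end UnitVectors

lemma ambQ_cyl_sub_cyl (n : ℕ) {e e' : Fin (n + 1) → ℝ}
    (he : ∑ i, e i ^ 2 = 1) (he' : ∑ i, e' i ^ 2 = 1) (τ τ' : ℝ) :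
    ambQ n (cyl n e τ - cyl n e' τ') = 2 * (∑ i, e i * e' i - cos (τ - τ')) := by
  simp only [ambQ, cyl, Prod.fst_sub, Prod.snd_sub, Pi.sub_apply]
  rw [sum_sub_sq_of_sum_sq_eq_one he he', cos_sub]
  linear_combination sin_sq_add_cos_sq τ + sin_sq_add_cos_sq τ'

/-- global causality criterion: for |τ − τ'| ≤ π,
q(Ξ(e,τ) − Ξ(e',τ')) > 0 iff |τ − τ'| > arccos(e·e'), and
q(Ξ(e,τ) − Ξ(e',τ')) < 0 iff |τ − τ'| < arccos(e·e'). -/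
theorem stmt_4 (n : ℕ) (e e' : Fin (n + 1) → ℝ)
    (he : ∑ i, e i ^ 2 = 1) (he' : ∑ i, e' i ^ 2 = 1) (τ τ' : ℝ)
    (hττ' : |τ - τ'| ≤ Real.pi) :
    (0 < ambQ n (cyl n e τ - cyl n e' τ') ↔ Real.arccos (∑ i, e i * e' i) < |τ - τ'|) ∧
    (ambQ n (cyl n e τ - cyl n e' τ') < 0 ↔ |τ - τ'| < Real.arccos (∑ i, e i * e' i)) := by
  have hS := sum_mul_mem_Icc_of_sum_sq_eq_one he he'
  have ht : |τ - τ'| ∈ Set.Icc 0 π := ⟨abs_nonneg _, hττ'⟩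
  rw [ambQ_cyl_sub_cyl n he he', arccos_lt_iff_cos_lt hS ht, lt_arccos_iff_lt_cos hS ht, cos_abs]
  constructor <;> constructor <;> intro h <;> linarith
end
end

section
/- Minkowski spacetime is exactly one tile of the cylinder: the map (e,τ) ↦ x(e,τ) = (sin τ, e¹, …, e^{d−1})/(e^d + cos τ) is a bijection from the set {(e,τ) : e ∈ S^{d−1}, −π < τ < π, e^d + cos τ > 0} onto all of ℝ^d. -/
/-!
Fix an integer d ≥ 1, written as d = n+1.
Minkowski space ℝ^d is `Fin (n+1) → ℝ`, with Minkowski bilinear form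
⟨x,y⟩ = x⁰y⁰ − Σ_{i=1}^{d−1} xⁱyⁱ.
The ambient space ℝ^{d+2} is modeled as `ℝ × (Fin (n+1) → ℝ) × ℝ`,
the three components holding ξ⁰, (ξ¹,…,ξ^d) and ξ^{d+1} respectively,
with quadratic form q(ξ) = (ξ⁰)² + (ξ^{d+1})² − Σ_{i=1}^{d} (ξⁱ)².
-/

noncomputable section

open Real

/-- The Minkowski point x(e,τ) = (sin τ, e¹, …, e^{d−1})/(e^d + cos τ). -/
def xcoord (n : ℕ) (e : Fin (n + 1) → ℝ) (τ : ℝ) : Fin (n + 1) → ℝ :=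
  fun j => (Fin.cons (Real.sin τ) (fun i : Fin n => e i.castSucc) : Fin (n + 1) → ℝ) j / (e (Fin.last n) + Real.cos τ)

/-!
`x(e,τ)` is the stereographic image `π(Ξ(e,τ))` of a point of the cylinder, which lies on the
null cone of `q`. A null vector `ξ` with `ξ^d + ξ^{d+1} ≠ 0` equals `(ξ^d + ξ^{d+1}) • ξ(π ξ)`,
a multiple of the Dirac–Weyl lift of its image. Hence the preimages of `x` in the tile are the
points of the open ray through `ξ(x)` on the cylinder `(ξ⁰)² + (ξ^{d+1})² = 1`: there is exactly
one, and its angle is unique in `(−π, π)` because the ray avoids `(ξ⁰, ξ^{d+1}) = (0, −1)`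
(if `x⁰ = 0` then `x² ≤ 0`, so `ξ^{d+1}(x) = (1 − x²)/2 > 0`).
-/

open Set

namespace Real

theorem eq_of_sin_eq_of_cos_eq {a b : ℝ} (ha : a ∈ Ioc (-π) π) (hb : b ∈ Ioc (-π) π)
    (hsin : sin a = sin b) (hcos : cos a = cos b) : a = b := by
  rw [← Angle.toReal_coe_eq_self_iff_mem_Ioc.mpr ha, ← Angle.toReal_coe_eq_self_iff_mem_Ioc.mpr hb,
    Angle.cos_sin_inj hcos hsin]

theorem exists_mem_Ioo_sin_eq_cos_eq {a b : ℝ} (hab : a ^ 2 + b ^ 2 = 1) (h : a ≠ 0 ∨ 0 < b) :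
    ∃ τ ∈ Ioo (-π) π, sin τ = a ∧ cos τ = b := by
  set z : ℂ := ⟨b, a⟩
  have hz : ‖z‖ = 1 := by
    rw [Complex.norm_def, Complex.normSq_mk, ← sqrt_one]
    congr 1
    linear_combination hab
  have hz0 : z ≠ 0 := norm_ne_zero_iff.mp (hz ▸ one_ne_zero)
  have harg : z.arg ≠ π := by
    rw [Ne, Complex.arg_eq_pi_iff]
    rintro ⟨hb, ha⟩
    exact h.elim (· ha) hb.not_gt
  refine ⟨z.arg, ⟨Complex.neg_pi_lt_arg z, (Complex.arg_le_pi z).lt_of_ne harg⟩, ?_, ?_⟩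
  · rw [Complex.sin_arg, hz, div_one]
  · rw [Complex.cos_arg hz0, hz, div_one]

end Real

variable {n : ℕ}

def timeSq (ξ : Ambient n) : ℝ := ξ.1 ^ 2 + ξ.2.2 ^ 2

lemma timeSq_smul (c : ℝ) (ξ : Ambient n) : timeSq (c • ξ) = c ^ 2 * timeSq ξ := by
  simp only [timeSq, Prod.smul_fst, Prod.smul_snd, smul_eq_mul]; ring

lemma timeSq_cyl (e : Fin (n + 1) → ℝ) (τ : ℝ) : timeSq (cyl n e τ) = 1 :=
  sin_sq_add_cos_sq τ

lemma ambQ_eq_timeSq_sub (ξ : Ambient n) : ambQ n ξ = timeSq ξ - ∑ i, ξ.2.1 i ^ 2 := rfl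

lemma ambQ_smul (c : ℝ) (ξ : Ambient n) : ambQ n (c • ξ) = c ^ 2 * ambQ n ξ := by
  simp only [ambQ_eq_timeSq_sub, timeSq_smul, Prod.smul_snd, Prod.smul_fst, Pi.smul_apply,
    smul_eq_mul, mul_pow, ← Finset.mul_sum]
  ring

lemma ambQ_cyl (e : Fin (n + 1) → ℝ) (τ : ℝ) : ambQ n (cyl n e τ) = 1 - ∑ i, e i ^ 2 := by
  rw [ambQ_eq_timeSq_sub, timeSq_cyl]; rfl

lemma minkSq_nonpos_of_apply_zero_eq_zero {x : Fin (n + 1) → ℝ} (hx : x 0 = 0) :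
    minkSq n x ≤ 0 := by
  simp only [minkSq, mink, hx, mul_zero, zero_sub, neg_nonpos]
  exact Finset.sum_nonneg fun i _ => mul_self_nonneg _

lemma diracWeyl_fst_ne_zero_or_snd_snd_pos (x : Fin (n + 1) → ℝ) :
    (diracWeyl n x).1 ≠ 0 ∨ 0 < (diracWeyl n x).2.2 := by
  refine or_iff_not_imp_left.mpr fun hx => ?_
  have := minkSq_nonpos_of_apply_zero_eq_zero (not_not.mp hx)
  change 0 < (1 - minkSq n x) / 2
  linarith

lemma timeSq_diracWeyl_pos (x : Fin (n + 1) → ℝ) : 0 < timeSq (diracWeyl n x) := by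
  rcases diracWeyl_fst_ne_zero_or_snd_snd_pos x with h | h
  · exact add_pos_of_pos_of_nonneg (by positivity) (sq_nonneg _)
  · exact add_pos_of_nonneg_of_pos (sq_nonneg _) (pow_pos h 2)

lemma ambQ_diracWeyl (x : Fin (n + 1) → ℝ) : ambQ n (diracWeyl n x) = 0 := by
  simp only [ambQ, diracWeyl, Fin.sum_univ_castSucc, Fin.snoc_castSucc, Fin.snoc_last, minkSq,
    mink, sq]
  ring

lemma stereo_smul {c : ℝ} (hc : c ≠ 0) (ξ : Ambient n) : stereo n (c • ξ) = stereo n ξ := by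
  funext j
  refine Fin.cases ?_ (fun i => ?_) j <;>
    simp only [stereo, Prod.smul_fst, Prod.smul_snd, Pi.smul_apply, smul_eq_mul, Fin.cons_zero,
      Fin.cons_succ, ← mul_add, mul_div_mul_left _ _ hc]

lemma stereo_diracWeyl (x : Fin (n + 1) → ℝ) : stereo n (diracWeyl n x) = x := by
  have hden : (1 + minkSq n x) / 2 + (1 - minkSq n x) / 2 = 1 := by ring
  funext j
  refine Fin.cases ?_ (fun i => ?_) j <;>
    simp only [stereo, diracWeyl, Fin.snoc_castSucc, Fin.snoc_last, hden, div_one, Fin.cons_zero,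
      Fin.cons_succ]

lemma eq_smul_diracWeyl_stereo {ξ : Ambient n} (hξ : ambQ n ξ = 0)
    (hs : ξ.2.1 (Fin.last n) + ξ.2.2 ≠ 0) :
    ξ = (ξ.2.1 (Fin.last n) + ξ.2.2) • diracWeyl n (stereo n ξ) := by
  have hm : minkSq n (stereo n ξ) =
      (ξ.2.1 (Fin.last n) - ξ.2.2) / (ξ.2.1 (Fin.last n) + ξ.2.2) := by
    rw [ambQ, Fin.sum_univ_castSucc] at hξ
    simp only [minkSq, mink, stereo, Fin.cons_zero, Fin.cons_succ, ← sq, div_pow,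
      ← Finset.sum_div]
    rw [div_sub_div_same, div_eq_div_iff (pow_ne_zero 2 hs) hs]
    linear_combination (ξ.2.1 (Fin.last n) + ξ.2.2) * hξ
  refine Prod.ext ?_ (Prod.ext (funext fun j => ?_) ?_)
  · simp only [Prod.smul_fst, smul_eq_mul, diracWeyl, stereo, Fin.cons_zero]
    field_simp
  · refine Fin.lastCases ?_ (fun i => ?_) j
    · simp only [Prod.smul_snd, Prod.smul_fst, Pi.smul_apply, smul_eq_mul, diracWeyl,
        Fin.snoc_last, hm]
      field_simp
      ring
    · simp only [Prod.smul_snd, Prod.smul_fst, Pi.smul_apply, smul_eq_mul, diracWeyl,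
        Fin.snoc_castSucc, stereo, Fin.cons_succ]
      field_simp
  · simp only [Prod.smul_snd, smul_eq_mul, diracWeyl, hm]
    field_simp
    ring

lemma xcoord_eq_stereo_cyl (e : Fin (n + 1) → ℝ) (τ : ℝ) : xcoord n e τ = stereo n (cyl n e τ) :=
  rfl

lemma cyl_eq_smul_diracWeyl_xcoord {e : Fin (n + 1) → ℝ} {τ : ℝ} (he : ∑ i, e i ^ 2 = 1)
    (hs : e (Fin.last n) + cos τ ≠ 0) :
    cyl n e τ = (e (Fin.last n) + cos τ) • diracWeyl n (xcoord n e τ) :=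
  eq_smul_diracWeyl_stereo (by rw [ambQ_cyl, he, sub_self]) hs

def minkowskiTile (n : ℕ) : Set ((Fin (n + 1) → ℝ) × ℝ) :=
  {p | (∑ i, p.1 i ^ 2 = 1) ∧ -π < p.2 ∧ p.2 < π ∧ 0 < p.1 (Fin.last n) + cos p.2}

lemma injOn_xcoord_minkowskiTile :
    InjOn (fun p : (Fin (n + 1) → ℝ) × ℝ => xcoord n p.1 p.2) (minkowskiTile n) := by
  rintro ⟨e₁, τ₁⟩ ⟨he₁, hτ₁, hτ₁', hs₁⟩ ⟨e₂, τ₂⟩ ⟨he₂, hτ₂, hτ₂', hs₂⟩ (hx : xcoord n e₁ τ₁ = _)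
  have h₁ := cyl_eq_smul_diracWeyl_xcoord he₁ hs₁.ne'
  have h₂ := cyl_eq_smul_diracWeyl_xcoord he₂ hs₂.ne'
  rw [hx] at h₁
  have hscale : e₁ (Fin.last n) + cos τ₁ = e₂ (Fin.last n) + cos τ₂ := by
    have ht₁ := congrArg timeSq h₁
    have ht₂ := congrArg timeSq h₂
    rw [timeSq_cyl, timeSq_smul] at ht₁ ht₂
    exact (sq_eq_sq₀ hs₁.le hs₂.le).mp
      (mul_right_cancel₀ (timeSq_diracWeyl_pos _).ne' (ht₁.symm.trans ht₂))
  have hcyl : cyl n e₁ τ₁ = cyl n e₂ τ₂ := by rw [h₁, h₂, hscale]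
  obtain ⟨hsin, rfl, hcos⟩ : sin τ₁ = sin τ₂ ∧ e₁ = e₂ ∧ cos τ₁ = cos τ₂ := by
    simpa only [cyl, Prod.mk.injEq] using hcyl
  exact Prod.ext rfl (eq_of_sin_eq_of_cos_eq ⟨hτ₁, hτ₁'.le⟩ ⟨hτ₂, hτ₂'.le⟩ hsin hcos)

lemma surjOn_xcoord_minkowskiTile :
    SurjOn (fun p : (Fin (n + 1) → ℝ) × ℝ => xcoord n p.1 p.2) (minkowskiTile n) univ := by
  intro x _
  set w := diracWeyl n x
  set r := (√(timeSq w))⁻¹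
  have hr : 0 < r := inv_pos.mpr (sqrt_pos.mpr (timeSq_diracWeyl_pos x))
  have hξ : timeSq (r • w) = 1 := by
    rw [timeSq_smul, inv_pow, sq_sqrt (timeSq_diracWeyl_pos x).le,
      inv_mul_cancel₀ (timeSq_diracWeyl_pos x).ne']
  obtain ⟨τ, hτ, hsin, hcos⟩ := exists_mem_Ioo_sin_eq_cos_eq hξ
    ((diracWeyl_fst_ne_zero_or_snd_snd_pos x).imp (mul_ne_zero hr.ne') (mul_pos hr))
  have hcyl : cyl n (r • w).2.1 τ = r • w := by rw [cyl, hsin, hcos]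
  refine ⟨((r • w).2.1, τ), ⟨?_, hτ.1, hτ.2, ?_⟩, ?_⟩
  · have hq := ambQ_cyl (r • w).2.1 τ
    rw [hcyl, ambQ_smul, ambQ_diracWeyl, mul_zero] at hq
    linarith
  · simp only [hcos, w, Prod.smul_snd, Prod.smul_fst, Pi.smul_apply, smul_eq_mul, diracWeyl,
      Fin.snoc_last]
    linarith
  · show xcoord n _ τ = x
    rw [xcoord_eq_stereo_cyl, hcyl, stereo_smul hr.ne', stereo_diracWeyl]

/-- (e,τ) ↦ x(e,τ) is a bijection from
{(e,τ) : e ∈ S^{d−1}, −π < τ < π, e^d + cos τ > 0} onto all of ℝ^d. -/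
theorem stmt_7 (n : ℕ) :
    Set.BijOn (fun p : (Fin (n + 1) → ℝ) × ℝ => xcoord n p.1 p.2)
      {p | (∑ i, p.1 i ^ 2 = 1) ∧ -Real.pi < p.2 ∧ p.2 < Real.pi ∧
            0 < p.1 (Fin.last n) + Real.cos p.2}
      Set.univ :=
  ⟨mapsTo_univ _ _, injOn_xcoord_minkowskiTile, surjOn_xcoord_minkowskiTile⟩
end
end

section
/- Composition law for proper conformal transformations: for b, c, x ∈ ℝ^d, define f_b(x) = (x − b x²)/D_b(x) with D_b(x) = 1 − 2⟨b,x⟩ + b²x². If D_b(x) ≠ 0, then D_{b+c}(x) = D_b(x) · D_c(f_b(x)); and if moreover D_c(f_b(x)) ≠ 0, then f_c(f_b(x)) = f_{b+c}(x). -/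
/-!
Fix an integer d ≥ 1, written as d = n+1.
Minkowski space ℝ^d is `Fin (n+1) → ℝ`, with Minkowski bilinear form
⟨x,y⟩ = x⁰y⁰ − Σ_{i=1}^{d−1} xⁱyⁱ.
The ambient space ℝ^{d+2} is modeled as `ℝ × (Fin (n+1) → ℝ) × ℝ`,
the three components holding ξ⁰, (ξ¹,…,ξ^d) and ξ^{d+1} respectively,
with quadratic form q(ξ) = (ξ⁰)² + (ξ^{d+1})² − Σ_{i=1}^{d} (ξⁱ)².
-/

noncomputable section

open Real

/-- D_b(x) = 1 − 2⟨b,x⟩ + b²x². -/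
def Dfac (n : ℕ) (b x : Fin (n + 1) → ℝ) : ℝ :=
  1 - 2 * mink n b x + minkSq n b * minkSq n x

/-- The proper conformal transformation f_b(x) = (x − b x²)/D_b(x). -/
def confTr (n : ℕ) (b x : Fin (n + 1) → ℝ) : Fin (n + 1) → ℝ :=
  (Dfac n b x)⁻¹ • (x - minkSq n x • b)


/-!
The composition law holds for any symmetric bilinear form `B` over a field. The key identity
is `B (f_b x) (f_b x) = B x x / D_b(x)`: with it, `D_c(f_b x)` becomes a rational function of
`B b x`, `B c x`, `B b c` and the squares of `b`, `c`, `x`, and `D_{b+c}(x) = D_b(x) D_c(f_b x)`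
is a polynomial identity after clearing `D_b(x)`. Then
`f_c(f_b x) = (D_b(x) D_c(f_b x))⁻¹ • (x - x² (b + c))`.
-/

namespace LinearMap.BilinForm

variable {𝕜 V : Type*} [Field 𝕜] [AddCommGroup V] [Module 𝕜 V]
  (B : LinearMap.BilinForm 𝕜 V)

def conformalDenom (b x : V) : 𝕜 := 1 - 2 * B b x + B b b * B x x

def specialConformal (b x : V) : V := (B.conformalDenom b x)⁻¹ • (x - B x x • b)

variable {B}

lemma apply_specialConformal (c b x : V) :
    B c (B.specialConformal b x) = (B.conformalDenom b x)⁻¹ * (B c x - B x x * B c b) := by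
  simp only [specialConformal, map_smul, map_sub, smul_eq_mul]

lemma apply_specialConformal_self (hB : B.IsSymm) {b x : V} (hD : B.conformalDenom b x ≠ 0) :
    B (B.specialConformal b x) (B.specialConformal b x) = B x x / B.conformalDenom b x := by
  simp only [specialConformal, map_smul, LinearMap.smul_apply, map_sub, LinearMap.sub_apply,
    smul_eq_mul, hB.eq x b]
  rw [conformalDenom] at hD ⊢
  field_simp
  ring

lemma conformalDenom_add (hB : B.IsSymm) {b x : V} (c : V) (hD : B.conformalDenom b x ≠ 0) :
    B.conformalDenom (b + c) x =
      B.conformalDenom b x * B.conformalDenom c (B.specialConformal b x) := by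
  rw [conformalDenom.eq_1 B c, apply_specialConformal, apply_specialConformal_self hB hD]
  simp only [conformalDenom, map_add, LinearMap.add_apply, hB.eq b c]
  rw [conformalDenom] at hD
  field_simp
  ring

lemma specialConformal_specialConformal (hB : B.IsSymm) {b x : V} (c : V)
    (hD : B.conformalDenom b x ≠ 0) :
    B.specialConformal c (B.specialConformal b x) = B.specialConformal (b + c) x := by
  rw [specialConformal.eq_1 B c, apply_specialConformal_self hB hD,
    specialConformal.eq_1 B (b + c), conformalDenom_add hB c hD, mul_inv, specialConformal]
  module

end LinearMap.BilinForm

open LinearMap.BilinForm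

def minkForm (n : ℕ) : LinearMap.BilinForm ℝ (Fin (n + 1) → ℝ) :=
  LinearMap.mk₂ ℝ (mink n)
    (fun x y z => by simp only [mink, Pi.add_apply, add_mul, Finset.sum_add_distrib]; ring)
    (fun a x y => by
      simp only [mink, Pi.smul_apply, smul_eq_mul, mul_assoc, ← Finset.mul_sum]; ring)
    (fun x y z => by simp only [mink, Pi.add_apply, mul_add, Finset.sum_add_distrib]; ring)
    (fun a x y => by
      simp only [mink, Pi.smul_apply, smul_eq_mul, mul_left_comm _ a, ← Finset.mul_sum]; ring)

lemma minkForm_isSymm (n : ℕ) : (minkForm n).IsSymm :=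
  ⟨fun x y => by simp only [minkForm, LinearMap.mk₂_apply, mink, mul_comm]⟩

lemma Dfac_eq_conformalDenom (n : ℕ) : Dfac n = (minkForm n).conformalDenom := rfl

lemma confTr_eq_specialConformal (n : ℕ) : confTr n = (minkForm n).specialConformal := rfl

/-- composition law for proper conformal transformations:
if D_b(x) ≠ 0 then D_{b+c}(x) = D_b(x)·D_c(f_b(x)); if moreover D_c(f_b(x)) ≠ 0
then f_c(f_b(x)) = f_{b+c}(x). -/
theorem stmt_10 (n : ℕ) (b c x : Fin (n + 1) → ℝ) (hb : Dfac n b x ≠ 0) :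
    Dfac n (b + c) x = Dfac n b x * Dfac n c (confTr n b x) ∧
    (Dfac n c (confTr n b x) ≠ 0 → confTr n c (confTr n b x) = confTr n (b + c) x) := by
  simp only [Dfac_eq_conformalDenom, confTr_eq_specialConformal] at hb ⊢
  exact ⟨conformalDenom_add (minkForm_isSymm n) c hb,
    fun _ => specialConformal_specialConformal (minkForm_isSymm n) c hb⟩
end
end
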